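/- arXiv:math/0604454 — 8 statements merged into one kernel-verified Lean document; each statement's English description precedes it below -/
import Mathlib

section
/- Let S ⊆ ℝ≥0^n and u ∈ ℝ≥0^n. Then u ∈ span(S) if and only if for each j ∈ supp(u) there exists x ∈ S with j ∈ supp(x) such that x(j) ≤ u(j) (componentwise). -/
/-!
If `u = ⨆ λ_x • x`, the term `λ_x • x` attaining the maximum at coordinate `j` lies below `u`
and agrees with it at `j`; dividing both by that common value gives `x(j) ≤ u(j)`. Conversely,
a witness `x_j` for each `j ∈ supp u`, rescaled to `u_j • x_j(j)`, lies below `u` and agrees with it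
at `j`, so `u` is the maximum of these finitely many multiples.
-/

open scoped NNReal

/-- The max-algebraic span of `S`: all vectors `⨆_{x ∈ S} λ_x • x` where only
finitely many coefficients `λ_x` are nonzero (`MaxSpan ∅ = {0}`). -/
def MaxSpan {n : ℕ} (S : Set (Fin n → ℝ≥0)) : Set (Fin n → ℝ≥0) :=
  {u | ∃ (F : Finset (Fin n → ℝ≥0)) (lam : (Fin n → ℝ≥0) → ℝ≥0),
    ↑F ⊆ S ∧ u = F.sup (fun x => lam x • x)}

/-- A max cone: a subset of `ℝ≥0ⁿ` closed under pointwise max `⊔` and under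
multiplication by nonnegative scalars. -/
def MaxCone {n : ℕ} (K : Set (Fin n → ℝ≥0)) : Prop :=
  0 ∈ K ∧ (∀ x ∈ K, ∀ y ∈ K, x ⊔ y ∈ K) ∧ (∀ (c : ℝ≥0), ∀ x ∈ K, c • x ∈ K)

/-- `u` is an extremal in `K` if `u = v ⊔ w` with `v, w ∈ K` implies `u = v` or `u = w`. -/
def IsExtremal {n : ℕ} (K : Set (Fin n → ℝ≥0)) (u : Fin n → ℝ≥0) : Prop :=
  u ∈ K ∧ ∀ v ∈ K, ∀ w ∈ K, u = v ⊔ w → u = v ∨ u = w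

/-- A vector is scaled if its max norm `⨆ i, x i` equals `1`. -/
def Scaled {n : ℕ} (x : Fin n → ℝ≥0) : Prop := (⨆ i, x i) = 1

/-- The support of a vector. -/
def supp {n : ℕ} (v : Fin n → ℝ≥0) : Set (Fin n) := {j | 0 < v j}

/-- For `j ∈ supp u`, `rescale u j = (1 / u j) • u`, the `j`-scaling `u(j)`. -/
noncomputable def rescale {n : ℕ} (u : Fin n → ℝ≥0) (j : Fin n) : Fin n → ℝ≥0 :=
  (u j)⁻¹ • u

/-- `T(j) = {u(j) : u ∈ T, j ∈ supp u}`. -/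
noncomputable def setScale {n : ℕ} (T : Set (Fin n → ℝ≥0)) (j : Fin n) :
    Set (Fin n → ℝ≥0) :=
  {y | ∃ u ∈ T, j ∈ supp u ∧ y = rescale u j}

/-- `u` is minimal in `T` if `v ∈ T` and `v ≤ u` imply `v = u`. -/
def MinimalIn {n : ℕ} (T : Set (Fin n → ℝ≥0)) (u : Fin n → ℝ≥0) : Prop :=
  u ∈ T ∧ ∀ v ∈ T, v ≤ u → v = u

/-- A set is totally dependent if each of its elements is a max combination of
the remaining ones. -/
def TotallyDependent {n : ℕ} (S : Set (Fin n → ℝ≥0)) : Prop :=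
  ∀ x ∈ S, x ∈ MaxSpan (S \ {x})

/-- A set is independent if none of its elements is a max combination of
the remaining ones. -/
def IndependentSet {n : ℕ} (S : Set (Fin n → ℝ≥0)) : Prop :=
  ∀ x ∈ S, x ∉ MaxSpan (S \ {x})

/-- A basis for `K` is an independent set of generators for `K`. -/
def IsBasis {n : ℕ} (S K : Set (Fin n → ℝ≥0)) : Prop :=
  IndependentSet S ∧ MaxSpan S = K

lemma rescale_le_rescale_of_smul_le {n : ℕ} {x u : Fin n → ℝ≥0} {j : Fin n} {c : ℝ≥0}
    (hc : c ≠ 0) (hle : c • x ≤ u) (hj : c * x j = u j) : rescale x j ≤ rescale u j := by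
  have hinv : (x j)⁻¹ = (u j)⁻¹ * c := by rw [← hj, mul_inv_rev, inv_mul_cancel_right₀ hc]
  calc rescale x j = (u j)⁻¹ • (c • x) := by rw [rescale, hinv, mul_smul]
    _ ≤ (u j)⁻¹ • u := smul_le_smul_of_nonneg_left hle zero_le

lemma smul_le_of_rescale_le {n : ℕ} {x u : Fin n → ℝ≥0} {j : Fin n}
    (hle : rescale x j ≤ rescale u j) : (u j * (x j)⁻¹) • x ≤ u := by
  rcases eq_or_ne (u j) 0 with hu | hu
  · simp [hu]
  · calc (u j * (x j)⁻¹) • x = u j • rescale x j := by rw [rescale, smul_smul]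
      _ ≤ u j • rescale u j := smul_le_smul_of_nonneg_left hle zero_le
      _ = u := by rw [rescale, smul_smul, mul_inv_cancel₀ hu, one_smul]

/-- Repetitions in the family are absorbed by giving each vector the largest of its
coefficients. -/
lemma finset_sup_smul_mem_maxSpan {n : ℕ} {ι : Type*} {S : Set (Fin n → ℝ≥0)} (s : Finset ι)
    (v : ι → Fin n → ℝ≥0) (c : ι → ℝ≥0) (hv : ∀ i ∈ s, v i ∈ S) :
    s.sup (fun i => c i • v i) ∈ MaxSpan S := by
  classical
  let lam : (Fin n → ℝ≥0) → ℝ≥0 := fun x => {i ∈ s | v i = x}.sup c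
  refine ⟨s.image v, lam, by simpa [Set.subset_def] using hv, le_antisymm ?_ ?_⟩
  · refine Finset.sup_le fun i his => ?_
    calc c i • v i ≤ lam (v i) • v i :=
          smul_le_smul_of_nonneg_right (Finset.le_sup (by simp [his])) zero_le
      _ ≤ _ := Finset.le_sup (f := fun x => lam x • x) (Finset.mem_image_of_mem v his)
  · refine Finset.sup_le fun x hx => ?_
    obtain ⟨i, his, rfl⟩ := Finset.mem_image.mp hx
    obtain ⟨k, hk, hkc⟩ := Finset.exists_mem_eq_sup {k ∈ s | v k = v i} ⟨i, by simp [his]⟩ c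
    obtain ⟨hks, hkv⟩ := Finset.mem_filter.mp hk
    calc lam (v i) • v i = c k • v k := by rw [hkv]; exact congrArg (· • v i) hkc
      _ ≤ _ := Finset.le_sup (f := fun i => c i • v i) hks

lemma exists_rescale_le_of_mem_maxSpan {n : ℕ} {S : Set (Fin n → ℝ≥0)} {u : Fin n → ℝ≥0}
    (hu : u ∈ MaxSpan S) {j : Fin n} (hj : j ∈ supp u) :
    ∃ x ∈ S, j ∈ supp x ∧ rescale x j ≤ rescale u j := by
  obtain ⟨F, lam, hFS, rfl⟩ := hu
  have hF : F.Nonempty := Finset.nonempty_iff_ne_empty.mpr (by rintro rfl; simp [supp] at hj)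
  obtain ⟨x, hxF, hx⟩ := F.exists_mem_eq_sup hF (fun x => lam x * x j)
  have hsup : lam x * x j = F.sup (fun x => lam x • x) j := by rw [Finset.sup_apply, ← hx]; rfl
  have hpos : 0 < lam x * x j := hsup ▸ hj
  exact ⟨x, hFS hxF, (CanonicallyOrderedAdd.mul_pos.mp hpos).2,
    rescale_le_rescale_of_smul_le (left_ne_zero_of_mul hpos.ne')
      (Finset.le_sup (f := fun x => lam x • x) hxF) hsup⟩

lemma finset_sup_smul_eq_of_rescale_le {n : ℕ} {u : Fin n → ℝ≥0} (x : Fin n → Fin n → ℝ≥0)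
    (hx : ∀ j ∈ supp u, j ∈ supp (x j) ∧ rescale (x j) j ≤ rescale u j) :
    ({j | 0 < u j} : Finset (Fin n)).sup (fun j => (u j * (x j j)⁻¹) • x j) = u := by
  refine le_antisymm
    (Finset.sup_le fun j hj => smul_le_of_rescale_le (hx j (Finset.mem_filter.mp hj).2).2)
    fun j => ?_
  rcases eq_zero_or_pos (u j) with hj | hj
  · simp [hj]
  rw [Finset.sup_apply]
  calc u j = ((u j * (x j j)⁻¹) • x j) j := by
        simp only [Pi.smul_apply, smul_eq_mul]
        exact (inv_mul_cancel_right₀ (hx j hj).1.ne' _).symm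
    _ ≤ _ := Finset.le_sup (f := fun k => ((u k * (x k k)⁻¹) • x k) j) (by simpa using hj)

/-- `u ∈ span(S)` iff for each `j ∈ supp(u)` there is `x ∈ S` with
`j ∈ supp(x)` and `x(j) ≤ u(j)` componentwise. -/
theorem stmt0 {n : ℕ} (S : Set (Fin n → ℝ≥0)) (u : Fin n → ℝ≥0) :
    u ∈ MaxSpan S ↔
      ∀ j ∈ supp u, ∃ x ∈ S, j ∈ supp x ∧ rescale x j ≤ rescale u j := by
  refine ⟨fun hu j hj => exists_rescale_le_of_mem_maxSpan hu hj, fun h => ?_⟩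
  choose! x hxS hx using h
  rw [← finset_sup_smul_eq_of_rescale_le x hx]
  exact finset_sup_smul_mem_maxSpan _ _ _ fun j hj => hxS j (Finset.mem_filter.mp hj).2
end

section
/- Let S ⊆ ℝ≥0^n and u ∈ ℝ≥0^n. Then u ∈ span(S) if and only if there exist k vectors x^1, …, x^k ∈ S with k ≤ |supp(u)| such that u ∈ span{x^1, …, x^k}. -/
open scoped NNReal

/-- `u ∈ span(S)` iff there are `k ≤ |supp(u)|` vectors
`x¹, …, xᵏ ∈ S` with `u ∈ span{x¹, …, xᵏ}`. -/
theorem stmt1 {n : ℕ} (S : Set (Fin n → ℝ≥0)) (u : Fin n → ℝ≥0) :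
    u ∈ MaxSpan S ↔
      ∃ k : ℕ, k ≤ (supp u).ncard ∧ ∃ x : Fin k → (Fin n → ℝ≥0),
        (∀ i, x i ∈ S) ∧ u ∈ MaxSpan (Set.range x) := by
  constructor
  · rintro ⟨F, lam, hFS, hu⟩
    classical
    set T : Finset (Fin n) := Finset.univ.filter (fun j => 0 < u j) with hT
    have key : ∀ j : Fin n, ∃ x, j ∈ T → x ∈ F ∧ (lam x • x) j = u j := by
      intro j
      by_cases hj : j ∈ T
      · have hF : F.Nonempty := by
          rcases F.eq_empty_or_nonempty with h | h
          · exfalso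
            have : u j = 0 := by
              rw [hu, h]; simp
            simp [hT, Finset.mem_filter, this] at hj
          · exact h
        obtain ⟨b, hb, hbeq⟩ := F.exists_mem_eq_sup hF (fun x => (lam x • x) j)
        refine ⟨b, fun _ => ⟨hb, ?_⟩⟩
        have : u j = F.sup (fun x => lam x • x) j := by rw [hu]
        rw [this, Finset.sup_apply]
        exact hbeq.symm
      · exact ⟨0, fun h => absurd h hj⟩
    choose w hw using key
    set F' : Finset (Fin n → ℝ≥0) := T.image w with hF'
    have hF'F : F' ⊆ F := by
      intro x hx
      simp only [hF', Finset.mem_image] at hx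
      obtain ⟨j, hj, rfl⟩ := hx
      exact (hw j hj).1
    have husup : u = F'.sup (fun x => lam x • x) := by
      funext j
      rw [Finset.sup_apply]
      apply le_antisymm
      · by_cases hj : j ∈ T
        · have h1 := (hw j hj).2
          calc u j = (lam (w j) • w j) j := h1.symm
          _ ≤ F'.sup (fun x => (lam x • x) j) :=
            Finset.le_sup (f := fun x => (lam x • x) j) (hF' ▸ Finset.mem_image_of_mem w hj)
        · have : u j = 0 := by
            by_contra h
            exact hj (by simp [hT, pos_iff_ne_zero, h])
          simp [this]
      · have : F'.sup (fun x => (lam x • x) j) ≤ F.sup (fun x => (lam x • x) j) :=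
          Finset.sup_mono hF'F
        refine this.trans ?_
        rw [hu, Finset.sup_apply]
    have hsuppT : supp u = (↑T : Set (Fin n)) := by
      ext j; simp [supp, hT]
    refine ⟨F'.card, ?_, fun i => ((F'.equivFin).symm i : Fin n → ℝ≥0), ?_, ?_⟩
    · calc F'.card ≤ T.card := Finset.card_image_le
      _ = (supp u).ncard := by rw [hsuppT, Set.ncard_coe_finset]
    · intro i
      exact hFS (hF'F ((F'.equivFin).symm i).2)
    · have hrange : Set.range (fun i => ((F'.equivFin).symm i : Fin n → ℝ≥0)) = ↑F' := by
        ext y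
        constructor
        · rintro ⟨i, rfl⟩; exact ((F'.equivFin).symm i).2
        · intro hy; exact ⟨F'.equivFin ⟨y, hy⟩, by simp⟩
      exact ⟨F', lam, le_of_eq hrange.symm, husup⟩
  · rintro ⟨k, _, x, hxS, F, lam, hFx, hu⟩
    exact ⟨F, lam, fun y hy => by obtain ⟨i, rfl⟩ := hFx hy; exact hxS i, hu⟩
end

section
/- Let S be a set of scaled generators for a max cone K in ℝ≥0^n and let u be a scaled extremal in K. Then u ∈ S. -/
open scoped NNReal

/-!
Write `u` as a finite max combination `⨆ λ_x • x` of elements of `S`. Since every term lies in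
`K`, extremality of `u` forces `u = λ_x • x` for a single `x ∈ S`, and as both `u` and `x` have
max norm `1`, `λ_x = 1`.
-/

variable {n : ℕ}

theorem subset_maxSpan (S : Set (Fin n → ℝ≥0)) : S ⊆ MaxSpan S := fun x hx =>
  ⟨{x}, fun _ => 1, by simpa using hx, by simp⟩

theorem iSup_smul_apply (c : ℝ≥0) (x : Fin n → ℝ≥0) : (⨆ i, (c • x) i) = c * ⨆ i, x i := by
  simp only [Pi.smul_apply, smul_eq_mul, NNReal.mul_iSup]

namespace Scaled

theorem ne_zero {x : Fin n → ℝ≥0} (hx : Scaled x) : x ≠ 0 := by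
  rintro rfl
  have hzero : ⨆ _ : Fin n, (0 : ℝ≥0) = 0 := nonpos_iff_eq_zero.1 (ciSup_le' fun _ => le_rfl)
  simp [Scaled, hzero] at hx

theorem smul_eq_self {x : Fin n → ℝ≥0} {c : ℝ≥0} (hx : Scaled x) (hcx : Scaled (c • x)) :
    c • x = x := by
  have hc : c = 1 := by
    rwa [Scaled, iSup_smul_apply, hx, mul_one] at hcx
  rw [hc, one_smul]

end Scaled

namespace IsExtremal

variable {K : Set (Fin n → ℝ≥0)} {u : Fin n → ℝ≥0}

theorem eq_zero_or_exists_eq_of_eq_finsetSup {ι : Type*} (hu : IsExtremal K u) (hK : MaxCone K)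
    {F : Finset ι} {f : ι → Fin n → ℝ≥0} (hf : ∀ i ∈ F, f i ∈ K) (huF : u = F.sup f) :
    u = 0 ∨ ∃ i ∈ F, u = f i := by
  -- Extremality only splits joins of two members of `K`, so membership is carried along.
  have key : F.sup f ∈ K ∧ (u = F.sup f → u = 0 ∨ ∃ i ∈ F, u = f i) := by
    refine Finset.sup_induction (p := fun a => a ∈ K ∧ (u = a → u = 0 ∨ ∃ i ∈ F, u = f i))
      ⟨hK.1, Or.inl⟩ ?_ fun i hi => ⟨hf i hi, fun h => Or.inr ⟨i, hi, h⟩⟩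
    rintro a ⟨haK, ha⟩ b ⟨hbK, hb⟩
    refine ⟨hK.2.1 a haK b hbK, fun hab => ?_⟩
    rcases hu.2 a haK b hbK hab with h | h
    exacts [ha h, hb h]
  exact key.2 huF

end IsExtremal

/-- if `S` is a set of scaled generators for the max cone `K` and
`u` is a scaled extremal in `K`, then `u ∈ S`. -/
theorem stmt3 {n : ℕ} (K S : Set (Fin n → ℝ≥0)) (hK : MaxCone K)
    (hgen : MaxSpan S = K) (hSsc : ∀ x ∈ S, Scaled x)
    (u : Fin n → ℝ≥0) (hu : IsExtremal K u) (husc : Scaled u) :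
    u ∈ S := by
  obtain ⟨F, lam, hFS, huF⟩ : u ∈ MaxSpan S := hgen ▸ hu.1
  have hterms : ∀ x ∈ F, lam x • x ∈ K := fun x hx =>
    hK.2.2 _ _ (hgen ▸ subset_maxSpan S (hFS hx))
  rcases hu.eq_zero_or_exists_eq_of_eq_finsetSup hK hterms huF with h0 | ⟨x, hxF, hux⟩
  · exact absurd h0 husc.ne_zero
  · have hxS : x ∈ S := hFS hxF
    rwa [hux, (hSsc x hxS).smul_eq_self (hux ▸ husc)]
end

section
/- For any max cone K in ℝ≥0^n, the set of scaled extremals of K is independent. -/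
open scoped NNReal

/-!
A max combination `x = ⨆ λ_y • y` of vectors `y` of a max cone is a finite `⊔` of elements of the
cone, so if `x` is extremal it equals one of the terms `λ_y • y`. If `x` and `y` are both scaled,
then comparing max norms gives `λ_y = 1`, hence `x = y`, contradicting `y ≠ x`.
-/

variable {n : ℕ} {K : Set (Fin n → ℝ≥0)}

lemma MaxCone.finset_sup_mem {ι : Type*} (hK : MaxCone K) {s : Finset ι} {f : ι → Fin n → ℝ≥0}
    (hf : ∀ i ∈ s, f i ∈ K) : s.sup f ∈ K :=
  Finset.sup_induction hK.1 hK.2.1 hf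

lemma IsExtremal.exists_eq_of_eq_finset_sup {ι : Type*} (hK : MaxCone K)
    {u : Fin n → ℝ≥0} (hu : IsExtremal K u) (hu0 : u ≠ 0) {s : Finset ι}
    {f : ι → Fin n → ℝ≥0} (hf : ∀ i ∈ s, f i ∈ K) (h : u = s.sup f) :
    ∃ i ∈ s, u = f i := by
  classical
  induction s using Finset.induction_on with
  | empty => exact absurd h hu0
  | insert i s _ ih =>
    rw [Finset.sup_insert] at h
    rcases hu.2 _ (hf i (s.mem_insert_self i)) _
        (hK.finset_sup_mem fun j hj => hf j (Finset.mem_insert_of_mem hj)) h with h | h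
    · exact ⟨i, s.mem_insert_self i, h⟩
    · obtain ⟨j, hj, rfl⟩ := ih (fun j hj => hf j (Finset.mem_insert_of_mem hj)) h
      exact ⟨j, Finset.mem_insert_of_mem hj, rfl⟩

lemma Scaled.ne_zero_s4 {x : Fin n → ℝ≥0} (hx : Scaled x) : x ≠ 0 := by
  rintro rfl
  rw [Scaled, ← NNReal.coe_inj, NNReal.coe_iSup] at hx
  simp at hx

lemma Scaled.eq_one_of_scaled_smul {x : Fin n → ℝ≥0} {c : ℝ≥0} (hx : Scaled x)
    (hcx : Scaled (c • x)) : c = 1 := by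
  unfold Scaled at hx hcx
  simp only [Pi.smul_apply, smul_eq_mul] at hcx
  rwa [← NNReal.mul_iSup, hx, mul_one] at hcx

/-- the set of scaled extremals of a max cone is independent. -/
theorem stmt4 {n : ℕ} (K : Set (Fin n → ℝ≥0)) (hK : MaxCone K) :
    IndependentSet {x | IsExtremal K x ∧ Scaled x} := by
  rintro x ⟨hxe, hxs⟩ ⟨F, lam, hFS, hx⟩
  have hterms : ∀ y ∈ F, lam y • y ∈ K := fun y hy => hK.2.2 _ _ (hFS hy).1.1.1
  obtain ⟨y, hyF, rfl⟩ := hxe.exists_eq_of_eq_finset_sup hK hxs.ne_zero_s4 hterms hx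
  obtain ⟨⟨-, hys⟩, hyx⟩ := hFS hyF
  rw [hys.eq_one_of_scaled_smul hxs, one_smul] at hyx
  exact hyx rfl
end

section
/- Let K be a max cone in ℝ≥0^n. If D_j(u) has a minimal element for each u ∈ K and each j ∈ supp(u), then K is generated by its set of extremals. -/
/-!
A minimal element `m` of `D_j(u)` is extremal: if `m = v ⊔ w` in `K`, one of `v, w` attains
`m j = 1`, so its `j`-scaling is an element of `D_j(u)` below `m`, hence equal to `m`.
Scaling back, `u j • m` is an extremal below `u` that agrees with `u` at `j`, and `u` is the
max of these extremals over `j ∈ supp u`.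
-/

open scoped NNReal

variable {n : ℕ}

lemma MaxCone.maxSpan_subset {K S : Set (Fin n → ℝ≥0)} (hK : MaxCone K) (hS : S ⊆ K) :
    MaxSpan S ⊆ K := by
  rintro u ⟨F, lam, hF, rfl⟩
  exact Finset.sup_induction (hK.1 : (⊥ : Fin n → ℝ≥0) ∈ K) (fun a ha b hb => hK.2.1 a ha b hb)
    fun x hx => hK.2.2 _ x (hS (hF hx))

lemma mem_maxSpan_of_forall_mem_supp {S : Set (Fin n → ℝ≥0)} {u : Fin n → ℝ≥0}
    (h : ∀ j ∈ supp u, ∃ e ∈ S, e ≤ u ∧ e j = u j) : u ∈ MaxSpan S := by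
  classical
  choose! e heS hle heq using h
  let s := Finset.univ.filter (· ∈ supp u)
  have hs : ∀ {j}, j ∈ s ↔ j ∈ supp u := by simp [s]
  refine ⟨s.image e, fun _ => 1, ?_, ?_⟩
  · simpa [Set.subset_def, hs] using heS
  · simp only [Finset.sup_image, Function.comp_def, one_smul]
    refine le_antisymm (fun i => ?_) (Finset.sup_le fun j hj => hle j (hs.1 hj))
    by_cases hi : i ∈ supp u
    · exact (heq i hi).ge.trans (Finset.le_sup (f := e) (hs.2 hi) i)
    · have hui : u i = 0 := nonpos_iff_eq_zero.mp (not_lt.mp hi)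
      simp [hui]

lemma isExtremal_of_forall_le_apply_eq {K : Set (Fin n → ℝ≥0)} {m : Fin n → ℝ≥0} (j : Fin n)
    (hm : m ∈ K) (H : ∀ z ∈ K, z ≤ m → z j = m j → z = m) : IsExtremal K m := by
  refine ⟨hm, fun v hv w hw hvw => ?_⟩
  have hj : m j = max (v j) (w j) := congrFun hvw j
  rcases max_choice (v j) (w j) with h | h
  · exact Or.inl (H v hv (hvw ▸ le_sup_left) (h ▸ hj).symm).symm
  · exact Or.inr (H w hw (hvw ▸ le_sup_right) (h ▸ hj).symm).symm

lemma IsExtremal.smul {K : Set (Fin n → ℝ≥0)} (hK : MaxCone K) {x : Fin n → ℝ≥0} {c : ℝ≥0}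
    (hx : IsExtremal K x) (hc : 0 < c) : IsExtremal K (c • x) := by
  refine ⟨hK.2.2 c x hx.1, fun v hv w hw hvw => ?_⟩
  let e := OrderIso.smulRight (β := Fin n → ℝ≥0) hc
  have hx' : x = e.symm v ⊔ e.symm w := by
    rw [← e.symm.map_sup, ← hvw]
    exact (e.symm_apply_apply x).symm
  rcases hx.2 _ (hK.2.2 _ v hv) _ (hK.2.2 _ w hw) hx' with h | h
  · exact Or.inl (h ▸ e.apply_symm_apply v)
  · exact Or.inr (h ▸ e.apply_symm_apply w)

lemma rescale_apply_self {u : Fin n → ℝ≥0} {j : Fin n} (hj : j ∈ supp u) :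
    rescale u j j = 1 :=
  inv_mul_cancel₀ (ne_of_gt hj)

lemma rescale_of_apply_eq_one {u : Fin n → ℝ≥0} {j : Fin n} (h : u j = 1) : rescale u j = u := by
  simp [rescale, h]

lemma smul_rescale {u : Fin n → ℝ≥0} {j : Fin n} (hj : j ∈ supp u) : u j • rescale u j = u :=
  smul_inv_smul₀ (ne_of_gt hj) u

lemma apply_self_eq_one_of_mem_setScale {T : Set (Fin n → ℝ≥0)} {j : Fin n}
    {y : Fin n → ℝ≥0} (hy : y ∈ setScale T j) : y j = 1 := by
  obtain ⟨w, -, hwj, rfl⟩ := hy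
  exact rescale_apply_self hwj

lemma isExtremal_of_minimalIn {K : Set (Fin n → ℝ≥0)} (hK : MaxCone K) {u m : Fin n → ℝ≥0}
    {j : Fin n} (hm : MinimalIn {v ∈ setScale K j | v ≤ rescale u j} m) : IsExtremal K m := by
  obtain ⟨⟨⟨w, hwK, hwj, rfl⟩, hle⟩, hmin⟩ := hm
  refine isExtremal_of_forall_le_apply_eq j (hK.2.2 _ w hwK) fun z hzK hzle hzj => ?_
  rw [rescale_apply_self hwj] at hzj
  have hzsupp : j ∈ supp z := show 0 < z j by rw [hzj]; exact one_pos
  exact hmin z ⟨⟨z, hzK, hzsupp, (rescale_of_apply_eq_one hzj).symm⟩, hzle.trans hle⟩ hzle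

/-- if for each `u ∈ K` and `j ∈ supp u` the set
`D_j(u) = {v ∈ K(j) : v ≤ u(j)}` has a minimal element, then the max cone `K`
is generated by its extremals. -/
theorem stmt6 {n : ℕ} (K : Set (Fin n → ℝ≥0)) (hK : MaxCone K)
    (h : ∀ u ∈ K, ∀ j ∈ supp u,
      ∃ m, MinimalIn {v ∈ setScale K j | v ≤ rescale u j} m) :
    MaxSpan {x | IsExtremal K x} = K := by
  refine (hK.maxSpan_subset fun x hx => hx.1).antisymm fun u hu =>
    mem_maxSpan_of_forall_mem_supp fun j hj => ?_
  obtain ⟨m, hm⟩ := h u hu j hj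
  refine ⟨u j • m, (isExtremal_of_minimalIn hK hm).smul hK hj, ?_, ?_⟩
  · calc u j • m ≤ u j • rescale u j := smul_le_smul_of_nonneg_left hm.1.2 bot_le
      _ = u := smul_rescale hj
  · simp [apply_self_eq_one_of_mem_setScale hm.1.1]
end

section
/- If S is a nonempty totally dependent set of scaled vectors in ℝ≥0^n, then S is infinite. -/
open scoped NNReal

/-! Let `x ∈ S` be written as `⨆ λ_y • y` with `y ∈ S \ {x}`, and let `i` be a coordinate with
`x i = 1`. The maximum at `i` is attained by some `y`, so `λ_y * y i = 1`; as `y i ≤ 1`, this forces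
`λ_y ≥ 1` and hence `y ≤ λ_y • y ≤ x`. Thus every element of `S` lies strictly above another one,
so `S` has no minimal element and cannot be finite. -/

namespace Scaled

variable {n : ℕ} {x : Fin n → ℝ≥0}

theorem le_one (hx : Scaled x) (i : Fin n) : x i ≤ 1 :=
  hx ▸ le_ciSup (Set.finite_range x).bddAbove i

theorem exists_eq_one (hx : Scaled x) : ∃ i, x i = 1 := by
  have : Nonempty (Fin n) := by
    by_contra h
    rw [not_nonempty_iff] at h
    simp [Scaled] at hx
  obtain ⟨i, hi⟩ := Finite.exists_max x
  exact ⟨i, le_antisymm (hx.le_one i) (hx ▸ ciSup_le hi)⟩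

end Scaled

theorem exists_le_of_mem_maxSpan {n : ℕ} {T : Set (Fin n → ℝ≥0)} {x : Fin n → ℝ≥0} {i : Fin n}
    (hT : ∀ y ∈ T, y i ≤ 1) (hx : x ∈ MaxSpan T) (hxi : 1 ≤ x i) : ∃ y ∈ T, y ≤ x := by
  obtain ⟨F, lam, hFT, rfl⟩ := hx
  rw [Finset.sup_apply] at hxi
  have hFne : F.Nonempty := by
    rw [Finset.nonempty_iff_ne_empty]
    rintro rfl
    simp at hxi
  obtain ⟨y, hyF, hy⟩ := Finset.exists_mem_eq_sup F hFne (fun y => lam y • y i)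
  have hlam : 1 ≤ lam y := by
    by_contra! h
    have hyi : lam y * y i < 1 := (mul_le_of_le_one_right' (hT y (hFT hyF))).trans_lt h
    exact hyi.not_ge (hxi.trans_eq hy)
  refine ⟨y, hFT hyF, fun j => ?_⟩
  calc y j ≤ lam y * y j := le_mul_of_one_le_left' hlam
    _ ≤ F.sup (fun z => lam z • z) j := Finset.le_sup (f := fun z => lam z • z) hyF j

theorem TotallyDependent.exists_lt {n : ℕ} {S : Set (Fin n → ℝ≥0)} (hSsc : ∀ x ∈ S, Scaled x)
    (hdep : TotallyDependent S) {x : Fin n → ℝ≥0} (hx : x ∈ S) : ∃ y ∈ S, y < x := by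
  obtain ⟨i, hxi⟩ := (hSsc x hx).exists_eq_one
  obtain ⟨y, ⟨hyS, hyx⟩, hle⟩ :=
    exists_le_of_mem_maxSpan (fun y hy => (hSsc y hy.1).le_one i) (hdep x hx) hxi.ge
  exact ⟨y, hyS, hle.lt_of_ne hyx⟩

/-- a nonempty totally dependent set of scaled vectors is
infinite. -/
theorem stmt10 {n : ℕ} (S : Set (Fin n → ℝ≥0)) (hne : S.Nonempty)
    (hSsc : ∀ x ∈ S, Scaled x) (hdep : TotallyDependent S) :
    S.Infinite := by
  intro hfin
  obtain ⟨x, hx⟩ := hfin.exists_minimal hne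
  obtain ⟨y, hyS, hyx⟩ := hdep.exists_lt hSsc hx.prop
  exact hx.not_prop_of_lt hyx hyS
end

section
/- Let K be a max cone in ℝ≥0^n. If the set of scaled extremals of K is closed in ℝ≥0^n and generates K, then K is closed in ℝ≥0^n. -/
open scoped NNReal

/-!
The scaled extremals `E` form a closed subset of the unit box, hence a compact set. Every
element `v` of `K = span E` is already a max combination of `n` elements of `E`: for each
coordinate `j`, keep one term `c • x` of a combination for `v` which realises `v j`. Since `x`
has a coordinate equal to `1`, its coefficient `c` is at most `max v`. So on every bounded set,
`K` coincides with the continuous image of the compact set `[0, R]ⁿ × Eⁿ` under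
`(c, x) ↦ ⨆ j, c j • x j`, which is closed; as `ℝ≥0ⁿ` is compactly generated, `K` is
closed.
-/

open scoped NNReal
open Set

variable {n : ℕ}

theorem Scaled.le_one_s15 {x : Fin n → ℝ≥0} (hx : Scaled x) (i : Fin n) : x i ≤ 1 := by
  rw [← hx]
  exact le_ciSup (finite_range x).bddAbove i

theorem Scaled.exists_eq_one_s15 {x : Fin n → ℝ≥0} (hx : Scaled x) : ∃ i, x i = 1 := by
  have : Nonempty (Fin n) := by
    by_contra h
    rw [not_nonempty_iff] at h
    simp [Scaled] at hx
  obtain ⟨i, hi⟩ := Finite.exists_max x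
  exact ⟨i, le_antisymm (hx.le_one_s15 i) (hx ▸ ciSup_le hi)⟩

theorem IsClosed.isCompact_of_forall_scaled {S : Set (Fin n → ℝ≥0)} (hS : IsClosed S)
    (h : ∀ x ∈ S, Scaled x) : IsCompact S :=
  (isCompact_univ_pi fun _ => isCompact_Icc).of_isClosed_subset hS
    fun x hx i _ => ⟨zero_le, (h x hx).le_one_s15 i⟩

theorem maxSpan_empty : MaxSpan (∅ : Set (Fin n → ℝ≥0)) = {0} := by
  ext u
  constructor
  · rintro ⟨F, lam, hF, rfl⟩
    rw [subset_empty_iff, Finset.coe_eq_empty] at hF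
    simp only [hF, Finset.sup_empty]
    rfl
  · rintro rfl
    exact ⟨∅, 0, by simp, rfl⟩

theorem exists_smul_le_of_mem_maxSpan {S : Set (Fin n → ℝ≥0)} {v : Fin n → ℝ≥0}
    (hv : v ∈ MaxSpan S) {j : Fin n} (hvj : v j ≠ 0) :
    ∃ c : ℝ≥0, ∃ x ∈ S, c • x ≤ v ∧ c * x j = v j := by
  obtain ⟨F, lam, hFS, rfl⟩ := hv
  have hF : F.Nonempty := by
    rw [Finset.nonempty_iff_ne_empty]
    rintro rfl
    exact hvj rfl
  obtain ⟨x, hxF, hx⟩ := F.exists_mem_eq_sup hF fun x => lam x * x j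
  refine ⟨lam x, x, hFS hxF, Finset.le_sup (f := fun x => lam x • x) hxF, ?_⟩
  rw [Finset.sup_apply]
  exact hx.symm

section MaxComb

variable {ι : Type*} [Fintype ι]

def maxComb (c : ι → ℝ≥0) (x : ι → Fin n → ℝ≥0) : Fin n → ℝ≥0 :=
  Finset.univ.sup fun j => c j • x j

theorem maxComb_apply (c : ι → ℝ≥0) (x : ι → Fin n → ℝ≥0) (i : Fin n) :
    maxComb c x i = Finset.univ.sup fun j => c j * x j i := by
  rw [maxComb, Finset.sup_apply]
  rfl

theorem continuous_maxComb :
    Continuous fun p : (ι → ℝ≥0) × (ι → Fin n → ℝ≥0) => maxComb p.1 p.2 := by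
  refine continuous_pi fun i => ?_
  simp_rw [maxComb_apply]
  fun_prop

theorem MaxCone.maxComb_mem {K : Set (Fin n → ℝ≥0)} (hK : MaxCone K) (c : ι → ℝ≥0)
    {x : ι → Fin n → ℝ≥0} (hx : ∀ j, x j ∈ K) : maxComb c x ∈ K :=
  Finset.sup_induction hK.1 hK.2.1 fun j _ => hK.2.2 (c j) (x j) (hx j)

end MaxComb

theorem exists_maxComb_eq_of_mem_maxSpan {S : Set (Fin n → ℝ≥0)} (hS : ∀ x ∈ S, Scaled x)
    {x₀ : Fin n → ℝ≥0} (hx₀ : x₀ ∈ S) {v : Fin n → ℝ≥0} (hv : v ∈ MaxSpan S) :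
    ∃ (c : Fin n → ℝ≥0) (x : Fin n → Fin n → ℝ≥0),
      (∀ j, x j ∈ S) ∧ (∀ j, c j ≤ ⨆ i, v i) ∧ maxComb c x = v := by
  have hterm (j : Fin n) : ∃ c : ℝ≥0, ∃ x ∈ S, c • x ≤ v ∧ c * x j = v j := by
    by_cases hvj : v j = 0
    · exact ⟨0, x₀, hx₀, by simp, by simp [hvj]⟩
    · exact exists_smul_le_of_mem_maxSpan hv hvj
  choose c x hxS hle heq using hterm
  refine ⟨c, x, hxS, fun j => ?_, le_antisymm (Finset.sup_le fun j _ => hle j) fun i => ?_⟩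
  · obtain ⟨i, hi⟩ := (hS _ (hxS j)).exists_eq_one_s15
    calc c j = c j * x j i := by rw [hi, mul_one]
      _ ≤ v i := hle j i
      _ ≤ ⨆ i, v i := le_ciSup (finite_range v).bddAbove i
  · rw [maxComb_apply, ← heq i]
    exact Finset.le_sup (f := fun j => c j * x j i) (Finset.mem_univ i)

def boundedMaxCombs (S : Set (Fin n → ℝ≥0)) (R : ℝ≥0) : Set (Fin n → ℝ≥0) :=
  (fun p : (Fin n → ℝ≥0) × (Fin n → Fin n → ℝ≥0) => maxComb p.1 p.2) ''
    ((univ.pi fun _ => Icc 0 R) ×ˢ univ.pi fun _ => S)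

theorem IsCompact.boundedMaxCombs {S : Set (Fin n → ℝ≥0)} (hS : IsCompact S) (R : ℝ≥0) :
    IsCompact (boundedMaxCombs S R) :=
  ((isCompact_univ_pi fun _ => isCompact_Icc).prod (isCompact_univ_pi fun _ => hS)).image
    continuous_maxComb

theorem MaxCone.boundedMaxCombs_subset {K S : Set (Fin n → ℝ≥0)} (hK : MaxCone K)
    (hSK : S ⊆ K) (R : ℝ≥0) : boundedMaxCombs S R ⊆ K := by
  rintro _ ⟨p, hp, rfl⟩
  exact hK.maxComb_mem p.1 fun j => hSK (hp.2 j (mem_univ j))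

theorem mem_boundedMaxCombs_of_mem_maxSpan {S : Set (Fin n → ℝ≥0)}
    (hS : ∀ x ∈ S, Scaled x) (hSne : S.Nonempty) {v b : Fin n → ℝ≥0}
    (hv : v ∈ MaxSpan S) (hvb : v ≤ b) :
    v ∈ boundedMaxCombs S (⨆ i, b i) := by
  obtain ⟨c, x, hxS, hc, rfl⟩ := exists_maxComb_eq_of_mem_maxSpan hS hSne.some_mem hv
  refine ⟨(c, x), ⟨fun j _ => ⟨zero_le, ?_⟩, fun j _ => hxS j⟩, rfl⟩
  exact (hc j).trans (ciSup_mono (finite_range b).bddAbove hvb)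

/-- if the set of scaled extremals of a max cone `K` is closed and
generates `K`, then `K` is closed. -/
theorem stmt15 {n : ℕ} (K : Set (Fin n → ℝ≥0)) (hK : MaxCone K)
    (hcl : IsClosed {x | IsExtremal K x ∧ Scaled x})
    (hgen : MaxSpan {x | IsExtremal K x ∧ Scaled x} = K) :
    IsClosed K := by
  set E := {x | IsExtremal K x ∧ Scaled x}
  have hE : ∀ x ∈ E, Scaled x := fun x hx => hx.2
  rcases E.eq_empty_or_nonempty with hEe | hEne
  · rw [← hgen, hEe, maxSpan_empty]
    exact isClosed_singleton
  refine CompactlyGeneratedSpace.isClosed fun C hC => ?_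
  obtain ⟨b, hb⟩ := hC.isBounded.bddAbove
  have hKC : K ∩ C = boundedMaxCombs E (⨆ i, b i) ∩ C := by
    refine subset_antisymm (fun v hv => ⟨?_, hv.2⟩)
      (inter_subset_inter_left C (hK.boundedMaxCombs_subset (fun x hx => hx.1.1) _))
    exact mem_boundedMaxCombs_of_mem_maxSpan hE hEne (hgen ▸ hv.1) (hb hv.2)
  rw [hKC]
  exact ((hcl.isCompact_of_forall_scaled hE).boundedMaxCombs _).isClosed.inter hC.isClosed
end

section
/- Every finitely generated max cone in ℝ≥0^n (K = span(S) for a finite set S ⊆ ℝ≥0^n) is closed in ℝ≥0^n. -/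
open scoped NNReal

/-- The optimal coefficient of `x` in representing `u`:
`min_{j : x j ≠ 0} (u j / x j)` (and `0` if `x = 0`). -/
noncomputable def maxCoef {n : ℕ} (x u : Fin n → ℝ≥0) : ℝ≥0 :=
  if h : (Finset.univ.filter fun j => x j ≠ 0).Nonempty then
    (Finset.univ.filter fun j => x j ≠ 0).inf' h (fun j => u j / x j)
  else 0

lemma maxCoef_smul_le {n : ℕ} (x u : Fin n → ℝ≥0) : maxCoef x u • x ≤ u := by
  intro i
  by_cases hxi : x i = 0
  · simp [hxi]
  · have hmem : i ∈ Finset.univ.filter fun j => x j ≠ 0 := by simp [hxi]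
    have hne : (Finset.univ.filter fun j => x j ≠ 0).Nonempty := ⟨i, hmem⟩
    have : maxCoef x u ≤ u i / x i := by
      rw [maxCoef, dif_pos hne]; exact Finset.inf'_le _ hmem
    calc (maxCoef x u • x) i = maxCoef x u * x i := rfl
      _ ≤ (u i / x i) * x i := by exact mul_le_mul_left this _
      _ = u i := div_mul_cancel₀ _ hxi

lemma le_maxCoef {n : ℕ} (x u : Fin n → ℝ≥0) (c : ℝ≥0) (h : c • x ≤ u) :
    c • x ≤ maxCoef x u • x := by
  by_cases hne : (Finset.univ.filter fun j => x j ≠ 0).Nonempty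
  · have hc : c ≤ maxCoef x u := by
      rw [maxCoef, dif_pos hne]
      apply Finset.le_inf'
      intro j hj
      rw [Finset.mem_filter] at hj
      have := h j
      rw [le_div_iff₀ (zero_lt_iff.mpr hj.2)]
      exact this
    exact smul_le_smul_of_nonneg_right hc (by positivity)
  · intro i
    by_cases hxi : x i = 0
    · simp [hxi]
    · exact absurd ⟨i, by simp [hxi]⟩ hne

lemma continuous_maxCoef {n : ℕ} (x : Fin n → ℝ≥0) : Continuous (maxCoef x) := by
  by_cases hne : (Finset.univ.filter fun j => x j ≠ 0).Nonempty
  · show Continuous fun u : Fin n → ℝ≥0 => maxCoef x u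
    unfold maxCoef; simp only [dif_pos hne]
    exact Continuous.finset_inf'_apply hne
      (fun j _ => (continuous_apply j).div_const _)
  · show Continuous fun u : Fin n → ℝ≥0 => maxCoef x u
    unfold maxCoef; simp only [dif_neg hne]; exact continuous_const

set_option maxHeartbeats 1000000 in
lemma stmt16_aux {n : ℕ} (S : Set (Fin n → ℝ≥0)) (hfin : S.Finite) :
    IsClosed ({u | ∃ (F : Finset (Fin n → ℝ≥0)) (lam : (Fin n → ℝ≥0) → ℝ≥0),
      ↑F ⊆ S ∧ u = F.sup (fun x => lam x • x)} : Set (Fin n → ℝ≥0)) := by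
  classical
  set G := hfin.toFinset with hG
  have key : {u | ∃ (F : Finset (Fin n → ℝ≥0)) (lam : (Fin n → ℝ≥0) → ℝ≥0),
      ↑F ⊆ S ∧ u = F.sup (fun x => lam x • x)}
      = {u : Fin n → ℝ≥0 | G.sup (fun x => maxCoef x u • x) = u} := by
    ext u; constructor
    · rintro ⟨F, lam, hFS, rfl⟩
      apply le_antisymm
      · exact Finset.sup_le fun x _ => maxCoef_smul_le x _
      · refine Finset.sup_le fun x hx => ?_
        have hxG : x ∈ G := hfin.mem_toFinset.mpr (hFS hx)
        have h1 : lam x • x ≤ F.sup (fun y => lam y • y) :=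
          Finset.le_sup (f := fun y => lam y • y) hx
        have h2 := le_maxCoef x (F.sup (fun y => lam y • y)) (lam x) h1
        exact le_trans h2
          (Finset.le_sup (f := fun y => maxCoef y (F.sup fun z => lam z • z) • y) hxG)
    · intro h
      exact ⟨G, fun x => maxCoef x u, by simp [hG, hfin.coe_toFinset], h.symm⟩
  rw [key]
  have hg : Continuous fun u : Fin n → ℝ≥0 => G.sup (fun x => maxCoef x u • x) := by
    apply continuous_pi; intro i
    have heq : ∀ u : Fin n → ℝ≥0,
        (G.sup fun x => maxCoef x u • x) i = G.sup fun x => maxCoef x u * x i := by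
      intro u; rw [Finset.sup_apply]; rfl
    simp only [heq]
    exact Continuous.finset_sup_apply fun x _ => (continuous_maxCoef x).mul continuous_const
  exact isClosed_eq hg continuous_id

/-- every finitely generated max cone is closed. -/
theorem stmt16 {n : ℕ} (S : Set (Fin n → ℝ≥0)) (hfin : S.Finite) :
    IsClosed (MaxSpan S) := stmt16_aux S hfin
end
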